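/- arXiv:2107.00563 — 2 statements merged into one kernel-verified Lean document; each statement's English description precedes it below -/
import Mathlib

section
/- Let X be a random variable with values in a measurable space 𝒳 and distribution P, and g : 𝒳 → ℝ^m measurable with E‖g(X)‖² < ∞, E g(X) = 0, and Σ = E[g(X) g(X)ᵀ] positive definite. Then inf_{θ ∈ S^{m−1}} E[ (θᵀ g(X))² 1_{θᵀ g(X) ≥ 0} ] > 0. -/
/-!
For `θ ≠ 0` the variable `θᵀg(X)` is centred with variance `θᵀΣθ > 0`; a centred variable that
is not a.e. zero takes positive values with positive probability, so
`F θ = E[((θᵀg(X))⁺)²]` is positive on the sphere. Since `|θᵀg| ≤ ‖θ‖ ∑ⱼ |gⱼ|` is square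
integrable, `F` is continuous by dominated convergence and attains its infimum on the compact
sphere.
-/

open MeasureTheory Matrix

theorem ite_nonneg_sq_eq_sq_posPart (a : ℝ) : (if 0 ≤ a then a ^ 2 else 0) = a⁺ ^ 2 := by
  split_ifs with h
  · rw [posPart_eq_self.2 h]
  · rw [posPart_eq_zero.2 (not_le.1 h).le, sq, zero_mul]

theorem abs_dotProduct_le_norm_mul_sum_abs {ι : Type*} [Fintype ι] (θ v : ι → ℝ) :
    |θ ⬝ᵥ v| ≤ ‖θ‖ * ∑ j, |v j| :=
  calc |θ ⬝ᵥ v| ≤ ∑ j, |θ j| * |v j| := by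
        simpa only [dotProduct, abs_mul] using
          Finset.abs_sum_le_sum_abs (fun j => θ j * v j) Finset.univ
    _ ≤ ∑ j, ‖θ‖ * |v j| := by
        gcongr with j
        exact norm_le_pi_norm θ j
    _ = ‖θ‖ * ∑ j, |v j| := by rw [Finset.mul_sum]

theorem isCompact_setOf_sum_sq_eq_one {ι : Type*} [Fintype ι] :
    IsCompact {θ : ι → ℝ | ∑ j, θ j ^ 2 = 1} := by
  refine Metric.isCompact_of_isClosed_isBounded
    (isClosed_eq (by fun_prop) continuous_const) ?_
  refine (Metric.isBounded_iff_subset_closedBall 0).2 ⟨1, fun θ hθ => ?_⟩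
  rw [Metric.mem_closedBall, dist_zero_right, pi_norm_le_iff_of_nonneg zero_le_one]
  intro j
  rw [Real.norm_eq_abs, abs_le_one_iff_mul_self_le_one, ← sq, ← show ∑ k, θ k ^ 2 = 1 from hθ]
  exact Finset.single_le_sum (fun k _ => sq_nonneg (θ k)) (Finset.mem_univ j)

section

variable {Ω : Type*} [MeasurableSpace Ω] {μ : Measure Ω}

theorem integral_sq_posPart_pos {f : Ω → ℝ} (hf : Integrable f μ) (hf2 : MemLp f 2 μ)
    (hf0 : ∫ x, f x ∂μ = 0) (hne : ¬f =ᵐ[μ] 0) : 0 < ∫ x, (f x)⁺ ^ 2 ∂μ := by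
  have hint : Integrable (fun x => (f x)⁺ ^ 2) μ := hf2.pos_part.integrable_sq
  refine (integral_nonneg fun x => sq_nonneg _).lt_of_ne' fun h => hne ?_
  have hle : ∀ᵐ x ∂μ, 0 ≤ -f x := by
    filter_upwards [(integral_eq_zero_iff_of_nonneg (fun x => sq_nonneg _) hint).1 h] with x hx
    simpa [posPart_eq_zero] using hx
  have hneg : -f =ᵐ[μ] 0 :=
    (integral_eq_zero_iff_of_nonneg_ae hle hf.neg).1 (by rw [integral_neg, hf0, neg_zero])
  filter_upwards [hneg] with x hx
  simpa using hx

variable {ι : Type*} [Fintype ι] {g : Ω → ι → ℝ}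

variable (μ g) in
noncomputable def secondMomentMatrix : Matrix ι ι ℝ := Matrix.of fun j k => ∫ x, g x j * g x k ∂μ

theorem memLp_dotProduct {p : ENNReal} (hg : ∀ j, MemLp (fun x => g x j) p μ) (θ : ι → ℝ) :
    MemLp (fun x => θ ⬝ᵥ g x) p μ :=
  memLp_finsetSum _ fun j _ => (hg j).const_mul (θ j)

theorem integral_dotProduct (hg : ∀ j, Integrable (fun x => g x j) μ) (θ : ι → ℝ) :
    ∫ x, θ ⬝ᵥ g x ∂μ = θ ⬝ᵥ fun j => ∫ x, g x j ∂μ := by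
  simp only [dotProduct]
  rw [integral_finsetSum _ fun j _ => (hg j).const_mul (θ j)]
  simp only [integral_const_mul]

theorem integral_sq_dotProduct (hg : ∀ j, MemLp (fun x => g x j) 2 μ) (θ : ι → ℝ) :
    ∫ x, (θ ⬝ᵥ g x) ^ 2 ∂μ = θ ⬝ᵥ secondMomentMatrix μ g *ᵥ θ := by
  have hprod : ∀ j k, Integrable (fun x => θ j * θ k * (g x j * g x k)) μ := fun j k =>
    ((hg j).integrable_mul (hg k)).const_mul _
  have hexpand : ∀ x, (θ ⬝ᵥ g x) ^ 2 = ∑ j, ∑ k, θ j * θ k * (g x j * g x k) := fun x => by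
    simp only [dotProduct, sq, Finset.sum_mul_sum]
    exact Finset.sum_congr rfl fun j _ => Finset.sum_congr rfl fun k _ => by ring
  simp only [hexpand]
  rw [integral_finsetSum _ fun j _ => integrable_finsetSum _ fun k _ => hprod j k]
  simp only [integral_finsetSum _ fun k _ => hprod _ k, integral_const_mul, dotProduct,
    mulVec, secondMomentMatrix, Matrix.of_apply, Finset.mul_sum]
  exact Finset.sum_congr rfl fun j _ => Finset.sum_congr rfl fun k _ => by ring

theorem continuous_integral_sq_posPart_dotProduct (hg : ∀ j, MemLp (fun x => g x j) 2 μ) :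
    Continuous fun θ : ι → ℝ => ∫ x, (θ ⬝ᵥ g x)⁺ ^ 2 ∂μ := by
  refine continuous_iff_continuousAt.2 fun θ₀ => ?_
  have hbound : MemLp (fun x => (‖θ₀‖ + 1) * ∑ j, |g x j|) 2 μ :=
    (memLp_finsetSum _ fun j _ => (hg j).abs).const_mul _
  refine continuousAt_of_dominated (bound := fun x => ((‖θ₀‖ + 1) * ∑ j, |g x j|) ^ 2)
    (Filter.Eventually.of_forall fun θ =>
      (continuous_posPart.pow 2).comp_aestronglyMeasurable (memLp_dotProduct hg θ).1) ?_
    hbound.integrable_sq (ae_of_all _ fun x => by fun_prop)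
  filter_upwards [Metric.closedBall_mem_nhds θ₀ one_pos] with θ hθ
  refine ae_of_all _ fun x => ?_
  have hθ : ‖θ‖ ≤ ‖θ₀‖ + 1 := norm_le_of_mem_closedBall hθ
  rw [Real.norm_eq_abs, abs_of_nonneg (sq_nonneg _)]
  refine pow_le_pow_left₀ (posPart_nonneg _) ?_ 2
  calc (θ ⬝ᵥ g x)⁺ ≤ |θ ⬝ᵥ g x| := max_le (le_abs_self _) (abs_nonneg _)
    _ ≤ ‖θ‖ * ∑ j, |g x j| := abs_dotProduct_le_norm_mul_sum_abs θ (g x)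
    _ ≤ (‖θ₀‖ + 1) * ∑ j, |g x j| := by gcongr

theorem integral_sq_posPart_dotProduct_pos [IsFiniteMeasure μ]
    (hg : ∀ j, MemLp (fun x => g x j) 2 μ) (hcent : ∀ j, ∫ x, g x j ∂μ = 0)
    (hpos : (secondMomentMatrix μ g).PosDef) {θ : ι → ℝ} (hθ : θ ≠ 0) :
    0 < ∫ x, (θ ⬝ᵥ g x)⁺ ^ 2 ∂μ := by
  have hvar : 0 < ∫ x, (θ ⬝ᵥ g x) ^ 2 ∂μ := by
    simpa [integral_sq_dotProduct hg] using hpos.dotProduct_mulVec_pos hθ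
  have hmean : ∫ x, θ ⬝ᵥ g x ∂μ = 0 := by
    rw [integral_dotProduct fun j => (hg j).integrable one_le_two]
    simp [hcent]
  refine integral_sq_posPart_pos ((memLp_dotProduct hg θ).integrable one_le_two)
    (memLp_dotProduct hg θ) hmean fun h0 => hvar.ne' ?_
  exact integral_eq_zero_of_ae (h0.mono fun x hx => by simp [hx])

end

theorem stmt7_general {𝓧 : Type*} [MeasurableSpace 𝓧]
    (P : Measure 𝓧) [IsProbabilityMeasure P]
    (m : ℕ) (hm : 0 < m)
    (g : 𝓧 → Fin m → ℝ)
    (hgL2 : ∀ j, MemLp (fun x => g x j) 2 P)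
    (hcent : ∀ j, (∫ x, g x j ∂P) = 0)
    (Sig : Matrix (Fin m) (Fin m) ℝ)
    (hSig : ∀ j k, Sig j k = ∫ x, g x j * g x k ∂P)
    (hposdef : Sig.PosDef) :
    0 < sInf ((fun θ : Fin m → ℝ =>
        ∫ x, (if 0 ≤ ∑ j, θ j * g x j then (∑ j, θ j * g x j) ^ 2 else 0) ∂P)
      '' {θ : Fin m → ℝ | (∑ j, θ j ^ 2) = 1}) := by
  set S := {θ : Fin m → ℝ | (∑ j, θ j ^ 2) = 1}
  set F := fun θ : Fin m → ℝ => ∫ x, (θ ⬝ᵥ g x)⁺ ^ 2 ∂P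
  have hF : (fun θ : Fin m → ℝ =>
      ∫ x, (if 0 ≤ ∑ j, θ j * g x j then (∑ j, θ j * g x j) ^ 2 else 0) ∂P) = F :=
    funext fun θ => integral_congr_ae (ae_of_all _ fun x => ite_nonneg_sq_eq_sq_posPart _)
  have hSig' : Sig = secondMomentMatrix P g := Matrix.ext hSig
  have hFpos : ∀ θ ∈ S, 0 < F θ := fun θ hθ =>
    integral_sq_posPart_dotProduct_pos hgL2 hcent (hSig' ▸ hposdef)
      (by rintro rfl; simp [S] at hθ)
  have hSne : S.Nonempty := ⟨Pi.single ⟨0, hm⟩ 1, by simp [S, Pi.single_apply]⟩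
  obtain ⟨θ, hθ, hmin⟩ := (isCompact_setOf_sum_sq_eq_one.image_of_continuousOn
    (continuous_integral_sq_posPart_dotProduct hgL2).continuousOn).sInf_mem (hSne.image F)
  rw [hF, ← hmin]
  exact hFpos θ hθ

/-- if `g : 𝒳 → ℝ^m` is square integrable under `P`, centered, and
`Σ = E[g gᵀ]` is positive definite, then
`inf_{θ ∈ S^{m-1}} E[(θᵀg(X))² 1_{θᵀg(X) ≥ 0}] > 0`. -/
theorem stmt7 {𝓧 : Type*} [MeasurableSpace 𝓧]
    (P : Measure 𝓧) [IsProbabilityMeasure P]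
    (m : ℕ) (hm : 0 < m)
    (g : 𝓧 → Fin m → ℝ) (hgmeas : ∀ j, Measurable fun x => g x j)
    (hgL2 : ∀ j, MemLp (fun x => g x j) 2 P)
    (hcent : ∀ j, (∫ x, g x j ∂P) = 0)
    (Sig : Matrix (Fin m) (Fin m) ℝ)
    (hSig : ∀ j k, Sig j k = ∫ x, g x j * g x k ∂P)
    (hposdef : Sig.PosDef) :
    0 < sInf ((fun θ : Fin m → ℝ =>
        ∫ x, (if 0 ≤ ∑ j, θ j * g x j then (∑ j, θ j * g x j) ^ 2 else 0) ∂P)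
      '' {θ : Fin m → ℝ | (∑ j, θ j ^ 2) = 1}) :=
  stmt7_general P m hm g hgL2 hcent Sig hSig hposdef
end

section
/- Under the empirical framework with informed weights, assume Pg = 0 and that Σ = Var_P(g) is positive definite. Let 𝓕 be a collection of measurable functions f : 𝒳 → ℝ admitting a measurable envelope F ∈ L²(P) (i.e. |f| ≤ F for all f ∈ 𝓕), and assume that almost surely sup_{f ∈ 𝓕} |ℙ_n f − P f| → 0 as n → ∞ (𝓕 is a P-Glivenko–Cantelli class, the suprema being measurable). Then almost surely sup_{f ∈ 𝓕} |ℙ_n^I f − P f| → 0 as n → ∞, where ℙ_n^I f = ℙ_n f − cov_n(g,f)ᵀ Σ_n^{-1} ℙ_n g. -/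
/-!
By the strong law of large numbers, almost surely `ℙₙ g → P g = 0`, `Σₙ → Σ`, and the empirical
means of `|gⱼ| F` and `F` converge. Since `Σ` is invertible, `Σₙ⁻¹ ℙₙ g → 0`, while the envelope
bounds `|covₙ(g, f)ⱼ| ≤ ℙₙ(|gⱼ| F) + |ℙₙ gⱼ| ℙₙ F` uniformly in `f ∈ 𝓕`. Hence the correction
`covₙ(g, f)ᵀ Σₙ⁻¹ ℙₙ g` tends to zero uniformly over `𝓕`, and the Glivenko–Cantelli property of
`ℙₙ` transfers to `ℙₙᴵ`.
-/

open MeasureTheory ProbabilityTheory Filter Matrix Topology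

noncomputable section

section Empirical

variable {𝓧 ι : Type*}

def empiricalMean (x : ℕ → 𝓧) (n : ℕ) (φ : 𝓧 → ℝ) : ℝ :=
  (n : ℝ)⁻¹ * ∑ i ∈ Finset.range n, φ (x i)

def empiricalCovMatrix (x : ℕ → 𝓧) (g : 𝓧 → ι → ℝ) (n : ℕ) : Matrix ι ι ℝ :=
  fun j k => empiricalMean x n (fun y => g y j * g y k) -
    empiricalMean x n (g · j) * empiricalMean x n (g · k)

def empiricalCov (x : ℕ → 𝓧) (g : 𝓧 → ι → ℝ) (n : ℕ) (f : 𝓧 → ℝ) : ι → ℝ :=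
  fun j => empiricalMean x n (fun y => g y j * f y) -
    empiricalMean x n (g · j) * empiricalMean x n f

def informedMean [Fintype ι] [DecidableEq ι] (x : ℕ → 𝓧) (g : 𝓧 → ι → ℝ) (n : ℕ)
    (f : 𝓧 → ℝ) : ℝ :=
  empiricalMean x n f -
    empiricalCov x g n f ⬝ᵥ ((empiricalCovMatrix x g n)⁻¹ *ᵥ fun j => empiricalMean x n (g · j))

variable {x : ℕ → 𝓧} {n : ℕ}

theorem abs_empiricalMean_le {φ ψ : 𝓧 → ℝ} (h : ∀ y, |φ y| ≤ ψ y) :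
    |empiricalMean x n φ| ≤ empiricalMean x n ψ := by
  rw [empiricalMean, empiricalMean, abs_mul, abs_inv, Nat.abs_cast]
  gcongr
  exact (Finset.abs_sum_le_sum_abs _ _).trans (Finset.sum_le_sum fun i _ => h _)

theorem abs_empiricalCov_le {g : 𝓧 → ι → ℝ} {f F : 𝓧 → ℝ} (hf : ∀ y, |f y| ≤ F y) (j : ι) :
    |empiricalCov x g n f j| ≤
      empiricalMean x n (fun y => |g y j| * F y) +
        |empiricalMean x n (g · j)| * empiricalMean x n F := by
  refine (abs_sub _ _).trans (add_le_add ?_ ?_)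
  · exact abs_empiricalMean_le fun y => by rw [abs_mul]; gcongr; exact hf y
  · rw [abs_mul]; gcongr; exact abs_empiricalMean_le hf

theorem bddAbove_abs_empiricalMean_sub_integral [MeasurableSpace 𝓧] {P : Measure 𝓧}
    {𝓕 : Set (𝓧 → ℝ)} {F : 𝓧 → ℝ} (hF : Integrable F P) (henv : ∀ f ∈ 𝓕, ∀ y, |f y| ≤ F y) :
    BddAbove (Set.range fun f : 𝓕 => |empiricalMean x n f - ∫ y, (f : 𝓧 → ℝ) y ∂P|) := by
  refine ⟨empiricalMean x n F + ∫ y, F y ∂P, ?_⟩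
  rintro _ ⟨⟨f, hf⟩, rfl⟩
  refine (abs_sub _ _).trans <| add_le_add (abs_empiricalMean_le (henv f hf)) ?_
  simpa only [Real.norm_eq_abs] using
    norm_integral_le_of_norm_le (f := f) hF
      (ae_of_all _ fun y => (Real.norm_eq_abs _).trans_le (henv f hf y))

theorem tendsto_empiricalCovMatrix {g : 𝓧 → ι → ℝ} {S : Matrix ι ι ℝ}
    (hg : ∀ j, Tendsto (fun n => empiricalMean x n (g · j)) atTop (𝓝 0))
    (hgg : ∀ j k, Tendsto (fun n => empiricalMean x n (fun y => g y j * g y k)) atTop (𝓝 (S j k))) :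
    Tendsto (fun n => empiricalCovMatrix x g n) atTop (𝓝 S) :=
  tendsto_pi_nhds.2 fun j => tendsto_pi_nhds.2 fun k => by
    simpa [empiricalCovMatrix] using (hgg j k).sub ((hg j).mul (hg k))

end Empirical

theorem tendsto_inv_mulVec_of_tendsto_zero {ι R : Type*} [Fintype ι] [DecidableEq ι] [Field R]
    [TopologicalSpace R] [IsTopologicalDivisionRing R]
    {A : ℕ → Matrix ι ι R} {S : Matrix ι ι R} {v : ℕ → ι → R}
    (hA : Tendsto A atTop (𝓝 S)) (hS : S.det ≠ 0) (hv : Tendsto v atTop (𝓝 0)) :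
    Tendsto (fun n => (A n)⁻¹ *ᵥ v n) atTop (𝓝 0) := by
  have hinv : ContinuousAt Inv.inv S :=
    continuousAt_matrix_inv S (by rw [Ring.inverse_eq_inv']; exact continuousAt_inv₀ hS)
  simpa [Function.comp_def] using
    (continuous_fst.matrix_mulVec continuous_snd).continuousAt.tendsto.comp
      ((hinv.tendsto.comp hA).prodMk_nhds hv)

theorem abs_dotProduct_le {ι R : Type*} [Fintype ι] [CommRing R] [LinearOrder R]
    [IsStrictOrderedRing R] {u v B : ι → R} (hu : ∀ j, |u j| ≤ B j) :
    |u ⬝ᵥ v| ≤ ∑ j, B j * |v j| :=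
  (Finset.abs_sum_le_sum_abs _ _).trans <| Finset.sum_le_sum fun j _ => by
    rw [abs_mul]; gcongr; exact hu j

theorem tendsto_iSup_abs_sub_of_tendsto_iSup_abs {ι : Type*} {a c : ℕ → ι → ℝ} {b : ℕ → ℝ}
    (hbdd : ∀ n, BddAbove (Set.range fun i => |a n i|))
    (ha : Tendsto (fun n => ⨆ i, |a n i|) atTop (𝓝 0))
    (hc : ∀ n i, |c n i| ≤ b n) (hb : Tendsto b atTop (𝓝 0)) :
    Tendsto (fun n => ⨆ i, |a n i - c n i|) atTop (𝓝 0) := by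
  refine squeeze_zero (fun n => Real.iSup_nonneg fun i => abs_nonneg _) (fun n => ?_)
    (by simpa using ha.add hb.abs)
  refine Real.iSup_le (fun i => (abs_sub _ _).trans (add_le_add (le_ciSup (hbdd n) i)
    ((hc n i).trans (le_abs_self _)))) ?_
  exact add_nonneg (Real.iSup_nonneg fun i => abs_nonneg _) (abs_nonneg _)

theorem tendsto_iSup_abs_informedMean_sub {𝓧 ι : Type*} [MeasurableSpace 𝓧] [Fintype ι]
    [DecidableEq ι] {P : Measure 𝓧} {x : ℕ → 𝓧} {g : 𝓧 → ι → ℝ} {S : Matrix ι ι ℝ}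
    {𝓕 : Set (𝓧 → ℝ)} {F : 𝓧 → ℝ} {LgF : ι → ℝ} {LF : ℝ}
    (hS : S.det ≠ 0) (hF : Integrable F P) (henv : ∀ f ∈ 𝓕, ∀ y, |f y| ≤ F y)
    (hGC : Tendsto (fun n => ⨆ f : 𝓕, |empiricalMean x n f - ∫ y, (f : 𝓧 → ℝ) y ∂P|)
      atTop (𝓝 0))
    (hg : ∀ j, Tendsto (fun n => empiricalMean x n (g · j)) atTop (𝓝 0))
    (hgg : ∀ j k,
      Tendsto (fun n => empiricalMean x n (fun y => g y j * g y k)) atTop (𝓝 (S j k)))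
    (hgF : ∀ j, Tendsto (fun n => empiricalMean x n (fun y => |g y j| * F y)) atTop (𝓝 (LgF j)))
    (hFlim : Tendsto (fun n => empiricalMean x n F) atTop (𝓝 LF)) :
    Tendsto (fun n => ⨆ f : 𝓕, |informedMean x g n f - ∫ y, (f : 𝓧 → ℝ) y ∂P|)
      atTop (𝓝 0) := by
  set w := fun n => (empiricalCovMatrix x g n)⁻¹ *ᵥ fun j => empiricalMean x n (g · j)
  have hw : Tendsto w atTop (𝓝 0) := tendsto_inv_mulVec_of_tendsto_zero
    (tendsto_empiricalCovMatrix hg hgg) hS (tendsto_pi_nhds.2 hg)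
  have hb : Tendsto (fun n => ∑ j, (empiricalMean x n (fun y => |g y j| * F y) +
      |empiricalMean x n (g · j)| * empiricalMean x n F) * |w n j|) atTop (𝓝 0) := by
    simpa using tendsto_finsetSum Finset.univ fun j _ =>
      ((hgF j).add ((hg j).abs.mul hFlim)).mul (tendsto_pi_nhds.1 hw j).abs
  simp only [informedMean, sub_right_comm _ (empiricalCov x g _ _ ⬝ᵥ _)]
  exact tendsto_iSup_abs_sub_of_tendsto_iSup_abs
    (fun n => bddAbove_abs_empiricalMean_sub_integral hF henv) hGC
    (fun n f => abs_dotProduct_le (abs_empiricalCov_le (henv f f.2))) hb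

theorem ae_tendsto_empiricalMean {Ω 𝓧 : Type*} [MeasurableSpace Ω] [MeasurableSpace 𝓧]
    {μ : Measure Ω} {P : Measure 𝓧} {X : ℕ → Ω → 𝓧} (hX : ∀ i, AEMeasurable (X i) μ)
    (hXid : ∀ i, Measure.map (X i) μ = P) (hXindep : Pairwise fun i j => IndepFun (X i) (X j) μ)
    {φ : 𝓧 → ℝ} (hφ : Measurable φ) (hφP : Integrable φ P) :
    ∀ᵐ ω ∂μ, Tendsto (fun n => empiricalMean (X · ω) n φ) atTop (𝓝 (∫ y, φ y ∂P)) := by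
  have hident : ∀ i, IdentDistrib (φ ∘ X i) (φ ∘ X 0) μ μ := fun i =>
    IdentDistrib.comp ⟨hX i, hX 0, by rw [hXid i, hXid 0]⟩ hφ
  have hint : Integrable (φ ∘ X 0) μ := by
    rw [← hXid 0] at hφP
    exact hφP.comp_aemeasurable (hX 0)
  have hmean : μ[φ ∘ X 0] = ∫ y, φ y ∂P := by
    rw [← hXid 0, integral_map (hX 0) hφ.aestronglyMeasurable]; rfl
  filter_upwards [strong_law_ae_real _ hint (fun i j hij => (hXindep hij).comp hφ hφ) hident]
    with ω hω
  rw [hmean] at hω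
  simpa only [empiricalMean, div_eq_inv_mul, Function.comp_apply] using hω

theorem stmt13_general {Ω 𝓧 : Type*} [MeasurableSpace Ω] [MeasurableSpace 𝓧]
    (μ : Measure Ω)
    (P : Measure 𝓧) [IsProbabilityMeasure P]
    (m : ℕ)
    (X : ℕ → Ω → 𝓧) (hXmeas : ∀ i, Measurable (X i))
    (hXid : ∀ i, Measure.map (X i) μ = P)
    (hXindep : iIndepFun X μ)
    (g : 𝓧 → Fin m → ℝ) (hgmeas : ∀ j, Measurable fun x => g x j)
    (hgL2 : ∀ j, MemLp (fun x => g x j) 2 P)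
    (hPg : ∀ j, (∫ x, g x j ∂P) = 0)
    (Sig : Matrix (Fin m) (Fin m) ℝ)
    (hSig : ∀ j k, Sig j k = ∫ x, g x j * g x k ∂P)
    (hposdef : Sig.PosDef)
    (𝓕 : Set (𝓧 → ℝ))
    (Fenv : 𝓧 → ℝ) (hFenvmeas : Measurable Fenv)
    (hFenvL2 : MemLp Fenv 2 P)
    (henv : ∀ f ∈ 𝓕, ∀ x, |f x| ≤ Fenv x)
    (Pn : ℕ → Ω → (𝓧 → ℝ) → ℝ)
    (hPn : ∀ n ω f, Pn n ω f = (n : ℝ)⁻¹ * ∑ i ∈ Finset.range n, f (X i ω))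
    (hGC : ∀ᵐ ω ∂μ,
      Tendsto (fun n : ℕ => ⨆ f : 𝓕, |Pn n ω f - ∫ x, (f : 𝓧 → ℝ) x ∂P|)
        atTop (nhds 0))
    (Png : ℕ → Ω → Fin m → ℝ)
    (hPng : ∀ n ω j, Png n ω j = Pn n ω (fun x => g x j))
    (Sign : ℕ → Ω → Matrix (Fin m) (Fin m) ℝ)
    (hSign : ∀ n ω j k, Sign n ω j k =
      Pn n ω (fun x => g x j * g x k) - Png n ω j * Png n ω k)
    (covn : ℕ → Ω → (𝓧 → ℝ) → Fin m → ℝ)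
    (hcovn : ∀ n ω f j,
      covn n ω f j = Pn n ω (fun x => g x j * f x) - Png n ω j * Pn n ω f)
    (PnI : ℕ → Ω → (𝓧 → ℝ) → ℝ)
    (hPnI : ∀ n ω f,
      PnI n ω f = Pn n ω f - covn n ω f ⬝ᵥ ((Sign n ω)⁻¹ *ᵥ Png n ω)) :
    ∀ᵐ ω ∂μ,
      Tendsto (fun n : ℕ => ⨆ f : 𝓕, |PnI n ω f - ∫ x, (f : 𝓧 → ℝ) x ∂P|)
        atTop (nhds 0) := by
  obtain rfl : Pn = fun n ω => empiricalMean (X · ω) n := by funext n ω f; exact hPn n ω f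
  obtain rfl : Png = fun n ω j => empiricalMean (X · ω) n (g · j) := by
    funext n ω j; exact hPng n ω j
  obtain rfl : Sign = fun n ω => empiricalCovMatrix (X · ω) g n := by
    funext n ω j k; exact hSign n ω j k
  obtain rfl : covn = fun n ω => empiricalCov (X · ω) g n := by
    funext n ω f j; exact hcovn n ω f j
  obtain rfl : PnI = fun n ω => informedMean (X · ω) g n := by funext n ω f; exact hPnI n ω f
  have slln {φ : 𝓧 → ℝ} (hφ : Measurable φ) (hφP : Integrable φ P) :=
    ae_tendsto_empiricalMean (fun i => (hXmeas i).aemeasurable) hXid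
      (fun i j hij => hXindep.indepFun hij) hφ hφP
  have hFenv : Integrable Fenv P := hFenvL2.integrable one_le_two
  have hg := ae_all_iff.2 fun j => slln (hgmeas j) ((hgL2 j).integrable one_le_two)
  have hgg := ae_all_iff.2 fun j => ae_all_iff.2 fun k =>
    slln (φ := fun x => g x j * g x k) ((hgmeas j).mul (hgmeas k))
      ((hgL2 j).integrable_mul (hgL2 k))
  have hgF := ae_all_iff.2 fun j =>
    slln (φ := fun x => |g x j| * Fenv x) ((hgmeas j).abs.mul hFenvmeas)
      ((hgL2 j).norm.integrable_mul hFenvL2)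
  filter_upwards [hGC, hg, hgg, hgF, slln hFenvmeas hFenv] with ω hGCω hgω hggω hgFω hFω
  exact tendsto_iSup_abs_informedMean_sub hposdef.det_pos.ne' hFenv henv hGCω
    (fun j => by simpa only [hPg] using hgω j) (fun j k => by simpa only [hSig] using hggω j k)
    hgFω hFω

/-- if `𝓕` is a `P`-Glivenko–Cantelli class with square-integrable
envelope `F`, then the informed empirical measure
`ℙₙᴵ f = ℙₙ f − covₙ(g,f)ᵀ Σₙ⁻¹ ℙₙ g` also satisfies
`sup_{f ∈ 𝓕} |ℙₙᴵ f − P f| → 0` almost surely. -/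
theorem stmt13 {Ω 𝓧 : Type*} [MeasurableSpace Ω] [MeasurableSpace 𝓧]
    (μ : Measure Ω) [IsProbabilityMeasure μ]
    (P : Measure 𝓧) [IsProbabilityMeasure P]
    (m : ℕ) (hm : 0 < m)
    (X : ℕ → Ω → 𝓧) (hXmeas : ∀ i, Measurable (X i))
    (hXid : ∀ i, Measure.map (X i) μ = P)
    (hXindep : iIndepFun X μ)
    (g : 𝓧 → Fin m → ℝ) (hgmeas : ∀ j, Measurable fun x => g x j)
    (hgL2 : ∀ j, MemLp (fun x => g x j) 2 P)
    (hPg : ∀ j, (∫ x, g x j ∂P) = 0)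
    (Sig : Matrix (Fin m) (Fin m) ℝ)
    (hSig : ∀ j k, Sig j k = ∫ x, g x j * g x k ∂P)
    (hposdef : Sig.PosDef)
    (𝓕 : Set (𝓧 → ℝ)) (hFmeas : ∀ f ∈ 𝓕, Measurable f)
    (Fenv : 𝓧 → ℝ) (hFenvmeas : Measurable Fenv)
    (hFenvL2 : MemLp Fenv 2 P)
    (henv : ∀ f ∈ 𝓕, ∀ x, |f x| ≤ Fenv x)
    (Pn : ℕ → Ω → (𝓧 → ℝ) → ℝ)
    (hPn : ∀ n ω f, Pn n ω f = (n : ℝ)⁻¹ * ∑ i ∈ Finset.range n, f (X i ω))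
    (hGC : ∀ᵐ ω ∂μ,
      Tendsto (fun n : ℕ => ⨆ f : 𝓕, |Pn n ω f - ∫ x, (f : 𝓧 → ℝ) x ∂P|)
        atTop (nhds 0))
    (Png : ℕ → Ω → Fin m → ℝ)
    (hPng : ∀ n ω j, Png n ω j = Pn n ω (fun x => g x j))
    (Sign : ℕ → Ω → Matrix (Fin m) (Fin m) ℝ)
    (hSign : ∀ n ω j k, Sign n ω j k =
      Pn n ω (fun x => g x j * g x k) - Png n ω j * Png n ω k)
    (covn : ℕ → Ω → (𝓧 → ℝ) → Fin m → ℝ)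
    (hcovn : ∀ n ω f j,
      covn n ω f j = Pn n ω (fun x => g x j * f x) - Png n ω j * Pn n ω f)
    (PnI : ℕ → Ω → (𝓧 → ℝ) → ℝ)
    (hPnI : ∀ n ω f,
      PnI n ω f = Pn n ω f - covn n ω f ⬝ᵥ ((Sign n ω)⁻¹ *ᵥ Png n ω)) :
    ∀ᵐ ω ∂μ,
      Tendsto (fun n : ℕ => ⨆ f : 𝓕, |PnI n ω f - ∫ x, (f : 𝓧 → ℝ) x ∂P|)
        atTop (nhds 0) :=
  stmt13_general μ P m X hXmeas hXid hXindep g hgmeas hgL2 hPg Sig hSig hposdef 𝓕 Fenv hFenvmeas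
    hFenvL2 henv Pn hPn hGC Png hPng Sign hSign covn hcovn PnI hPnI
end
end
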